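/- Let X, Y, Z be n-dimensional compact polyhedra in (ℝ_{≥0})^n with X = Y ∪ Z, O ∈ Y, O ∉ Z, and suppose that for every nonempty I ⊆ {1,…,n} the intersection Y^I ∩ Z^I has dimension strictly less than |I|. Then ν(X) = ν(Y) + ν(Z). -/

import Mathlib

/-!
For every `I`, the sets `Y^I` and `Z^I` meet in a Lebesgue-null subset of `ℝ^I`: for `I ≠ ∅`
their intersection lies in a proper affine subspace of `ℝ^I`, and for `I = ∅` it is empty
because `O ∉ Z`. Hence every coordinate volume of `Y ∪ Z` is the sum of those of `Y` and `Z`,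
and the Newton number, being linear in the coordinate volumes, is additive.
-/

open MeasureTheory

/-- The nonnegative orthant in `ℝ^n`. -/
def orthant (n : ℕ) : Set (Fin n → ℝ) := {x | ∀ i, 0 ≤ x i}

/-- The coordinate subspace `ℝ^I = {x : x_i = 0 for i ∉ I}`. -/
def coordSub {n : ℕ} (I : Finset (Fin n)) : Set (Fin n → ℝ) := {x | ∀ i ∉ I, x i = 0}

/-- The projection `π_I` setting the coordinates indexed by `I` to zero. -/
def coordProj {n : ℕ} (I : Finset (Fin n)) (x : Fin n → ℝ) : Fin n → ℝ :=
  fun i => if i ∈ I then 0 else x i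

/-- `|I|`-dimensional Lebesgue volume of `X ∩ ℝ^I` computed inside `ℝ^I`. -/
noncomputable def coordVol {n : ℕ} (I : Finset (Fin n)) (X : Set (Fin n → ℝ)) : ℝ :=
  (volume ((fun (y : I → ℝ) => (fun i => if h : i ∈ I then y ⟨i, h⟩ else 0 : Fin n → ℝ)) ⁻¹' X)).toReal

/-- The Newton number of `X` computed relative to the coordinate set `K`
(for the ambient space `ℝ^K`); taking `K = univ` gives the usual Newton number. -/
noncomputable def newtonNumberOn {n : ℕ} (K : Finset (Fin n)) (X : Set (Fin n → ℝ)) : ℝ :=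
  ∑ I ∈ K.powerset, (-1 : ℝ) ^ (K.card - I.card) * (Nat.factorial I.card : ℝ) * coordVol I X

/-- `ℝ^I` is a full-supporting coordinate subspace for the simplex with vertices `P`:
it contains exactly `|I| + 1` of the vertices. -/
def FullSupp {n : ℕ} (P : Fin (n+1) → (Fin n → ℝ)) (I : Finset (Fin n)) : Prop :=
  Nat.card {j : Fin (n+1) // P j ∈ coordSub I} = I.card + 1

/-- A compact polyhedron: finite union of compact convex polytopes. -/
def IsCompactPolyhedron {n : ℕ} (X : Set (Fin n → ℝ)) : Prop :=
  ∃ (k : ℕ) (F : Fin k → Finset (Fin n → ℝ)),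
    X = ⋃ i, convexHull ℝ (↑(F i) : Set (Fin n → ℝ))

/-- A pure `n`-dimensional compact polyhedron in `ℝ^n`: finite union of `n`-dimensional
compact convex polytopes. -/
def IsPureCompactPolyhedron {n : ℕ} (X : Set (Fin n → ℝ)) : Prop :=
  ∃ (k : ℕ) (F : Fin k → Finset (Fin n → ℝ)),
    X = (⋃ i, convexHull ℝ (↑(F i) : Set (Fin n → ℝ))) ∧
    ∀ i, affineSpan ℝ (↑(F i) : Set (Fin n → ℝ)) = ⊤

/-- A quasi-convenient polyhedron in the nonnegative orthant. -/
def QuasiConvenient {n : ℕ} (X : Set (Fin n → ℝ)) : Prop :=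
  IsCompactPolyhedron X ∧ X ⊆ orthant n ∧ (0 : Fin n → ℝ) ∈ X ∧
  (∀ P ∈ Set.extremePoints ℝ X, ∀ i, P i ≠ 0 → 1 ≤ P i) ∧
  ∀ I : Finset (Fin n),
    Nonempty ((X ∩ coordSub I : Set (Fin n → ℝ)) ≃ₜ
      (Metric.closedBall (0 : EuclideanSpace ℝ (Fin I.card)) 1))

/-- `F^l_k(d_1,…,d_k) = Σ_{i_1+⋯+i_k=l-k} d_1^{i_1+1}⋯d_k^{i_k+1}`, where `d j`
denotes `d_j` for `1 ≤ j ≤ k`. -/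
def Fpoly (k l : ℕ) (d : ℕ → ℕ) : ℕ :=
  ∑ c ∈ Finset.Nat.antidiagonalTuple k (l - k), ∏ j : Fin k, d (j.val + 1) ^ (c j + 1)

/-- `G^l_k(d_1,…,d_k) = Σ_{i_1+⋯+i_k=l-k} d_1^{i_1}⋯d_k^{i_k}`. -/
def Gpoly (k l : ℕ) (d : ℕ → ℕ) : ℕ :=
  ∑ c ∈ Finset.Nat.antidiagonalTuple k (l - k), ∏ j : Fin k, d (j.val + 1) ^ (c j)

open Classical in
/-- The `r`-th Newton number of `(d_1,…,d_r)`-type, relative to the coordinate set `K`. -/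
noncomputable def rNewtonOn {n : ℕ} (K : Finset (Fin n)) (r : ℕ) (d : ℕ → ℕ)
    (X : Set (Fin n → ℝ)) : ℝ :=
  (∑ I ∈ K.powerset.filter (fun I => r ≤ I.card),
      (-1 : ℝ) ^ (K.card - I.card) * (Fpoly r I.card d : ℝ) *
        (Nat.factorial I.card : ℝ) * coordVol I X)
  + (if (0 : Fin n → ℝ) ∈ X then 1 else 0) * (-1 : ℝ) ^ (K.card - r + 1)

open Module

theorem IsCompactPolyhedron.isCompact {n : ℕ} {X : Set (Fin n → ℝ)}
    (h : IsCompactPolyhedron X) : IsCompact X := by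
  obtain ⟨k, F, rfl⟩ := h
  exact isCompact_iUnion fun i => (F i).finite_toSet.isCompact_convexHull ℝ

theorem addHaar_eq_zero_of_finrank_vectorSpan_lt {E : Type*} [NormedAddCommGroup E]
    [NormedSpace ℝ E] [MeasurableSpace E] [BorelSpace E] [FiniteDimensional ℝ E]
    (μ : Measure E) [μ.IsAddHaarMeasure] {s : Set E}
    (hs : finrank ℝ (vectorSpan ℝ s) < finrank ℝ E) : μ s = 0 := by
  refine measure_mono_null (subset_affineSpan ℝ s) (Measure.addHaar_affineSubspace μ _ ?_)
  intro htop
  rw [← direction_affineSpan, htop, AffineSubspace.direction_top, finrank_top] at hs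
  exact hs.false

theorem finrank_vectorSpan_preimage_le {k E F : Type*} [DivisionRing k] [AddCommGroup E]
    [Module k E] [AddCommGroup F] [Module k F] [FiniteDimensional k F]
    {f : E →ₗ[k] F} (hf : Function.Injective f) (s : Set F) :
    finrank k (vectorSpan k (f ⁻¹' s)) ≤ finrank k (vectorSpan k s) :=
  calc finrank k (vectorSpan k (f ⁻¹' s))
      = finrank k ((vectorSpan k (f ⁻¹' s)).map f) :=
        (Submodule.equivMapOfInjective f hf _).finrank_eq
    _ = finrank k (vectorSpan k (f '' (f ⁻¹' s))) :=
        congrArg (fun p : Submodule k F => finrank k p) f.toAffineMap.map_vectorSpan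
    _ ≤ finrank k (vectorSpan k s) :=
        Submodule.finrank_mono (vectorSpan_mono k (Set.image_preimage_subset f s))

def coordEmbedding {n : ℕ} (I : Finset (Fin n)) : (I → ℝ) →ₗ[ℝ] (Fin n → ℝ) where
  toFun y i := if h : i ∈ I then y ⟨i, h⟩ else 0
  map_add' y z := by funext i; by_cases h : i ∈ I <;> simp [h]
  map_smul' c y := by funext i; by_cases h : i ∈ I <;> simp [h]

section coordEmbedding

variable {n : ℕ} (I : Finset (Fin n))

theorem coordEmbedding_injective : Function.Injective (coordEmbedding I) := by
  intro y z h
  funext j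
  simpa [coordEmbedding, dif_pos j.2] using congrFun h j

theorem coordEmbedding_mem_coordSub (y : I → ℝ) : coordEmbedding I y ∈ coordSub I :=
  fun i hi => by simp [coordEmbedding, dif_neg hi]

theorem preimage_coordEmbedding_inter_coordSub (A : Set (Fin n → ℝ)) :
    coordEmbedding I ⁻¹' (A ∩ coordSub I) = coordEmbedding I ⁻¹' A := by
  ext y
  simp [coordEmbedding_mem_coordSub]

theorem coordVol_eq (X : Set (Fin n → ℝ)) :
    coordVol I X = (volume (coordEmbedding I ⁻¹' X)).toReal := rfl

theorem isCompact_preimage_coordEmbedding {X : Set (Fin n → ℝ)} (hX : IsCompact X) :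
    IsCompact (coordEmbedding I ⁻¹' X) :=
  ((coordEmbedding I).isClosedEmbedding_of_injective
    (LinearMap.ker_eq_bot.mpr (coordEmbedding_injective I))).isCompact_preimage hX

theorem coordVol_union {Y Z : Set (Fin n → ℝ)} (hY : IsCompact Y) (hZ : IsCompact Z)
    (hYZ : volume (coordEmbedding I ⁻¹' (Y ∩ Z)) = 0) :
    coordVol I (Y ∪ Z) = coordVol I Y + coordVol I Z := by
  rw [coordVol_eq, coordVol_eq, coordVol_eq, Set.preimage_union,
    measure_union₀ (s := coordEmbedding I ⁻¹' Y)
      (isCompact_preimage_coordEmbedding I hZ).isClosed.nullMeasurableSet hYZ]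
  exact ENNReal.toReal_add (isCompact_preimage_coordEmbedding I hY).measure_lt_top.ne
    (isCompact_preimage_coordEmbedding I hZ).measure_lt_top.ne

theorem volume_preimage_coordEmbedding_eq_zero {W : Set (Fin n → ℝ)}
    (hW : finrank ℝ (vectorSpan ℝ W) < I.card) : volume (coordEmbedding I ⁻¹' W) = 0 := by
  refine addHaar_eq_zero_of_finrank_vectorSpan_lt volume ?_
  rw [finrank_fintype_fun_eq_card, Fintype.card_coe]
  exact (finrank_vectorSpan_preimage_le (coordEmbedding_injective I) W).trans_lt hW

theorem volume_preimage_coordEmbedding_inter_eq_zero {Y Z : Set (Fin n → ℝ)}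
    (hOZ : (0 : Fin n → ℝ) ∉ Z)
    (hdim : I.Nonempty →
      (Y ∩ coordSub I) ∩ (Z ∩ coordSub I) = ∅ ∨
      finrank ℝ (vectorSpan ℝ ((Y ∩ coordSub I) ∩ (Z ∩ coordSub I))) < I.card) :
    volume (coordEmbedding I ⁻¹' (Y ∩ Z)) = 0 := by
  rcases I.eq_empty_or_nonempty with rfl | hI
  · have hZ : coordEmbedding (∅ : Finset (Fin n)) ⁻¹' Z = ∅ :=
      Set.eq_empty_of_forall_notMem fun y hy => hOZ <| by
        rwa [Set.mem_preimage,
          show coordEmbedding ∅ y = 0 from funext fun i => by simp [coordEmbedding]] at hy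
    rw [Set.preimage_inter, hZ, Set.inter_empty, measure_empty]
  have hpre : coordEmbedding I ⁻¹' ((Y ∩ coordSub I) ∩ (Z ∩ coordSub I)) =
      coordEmbedding I ⁻¹' (Y ∩ Z) := by
    rw [Set.preimage_inter, preimage_coordEmbedding_inter_coordSub,
      preimage_coordEmbedding_inter_coordSub, Set.preimage_inter]
  rw [← hpre]
  rcases hdim hI with hempty | hlow
  · rw [hempty, Set.preimage_empty, measure_empty]
  · exact volume_preimage_coordEmbedding_eq_zero I hlow

end coordEmbedding

theorem newtonNumberOn_union {n : ℕ} (K : Finset (Fin n)) {Y Z : Set (Fin n → ℝ)}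
    (h : ∀ I, coordVol I (Y ∪ Z) = coordVol I Y + coordVol I Z) :
    newtonNumberOn K (Y ∪ Z) = newtonNumberOn K Y + newtonNumberOn K Z := by
  simp only [newtonNumberOn, h, mul_add, Finset.sum_add_distrib]

theorem stmt6_general (n : ℕ) (X Y Z : Set (Fin n → ℝ))
    (hYp : IsCompactPolyhedron Y) (hZp : IsCompactPolyhedron Z)
    (hXYZ : X = Y ∪ Z) (hOZ : (0 : Fin n → ℝ) ∉ Z)
    (hdim : ∀ I : Finset (Fin n), I.Nonempty →
      (Y ∩ coordSub I) ∩ (Z ∩ coordSub I) = ∅ ∨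
      Module.finrank ℝ (vectorSpan ℝ ((Y ∩ coordSub I) ∩ (Z ∩ coordSub I))) < I.card) :
    newtonNumberOn Finset.univ X =
      newtonNumberOn Finset.univ Y + newtonNumberOn Finset.univ Z := by
  subst hXYZ
  exact newtonNumberOn_union _ fun I => coordVol_union I hYp.isCompact hZp.isCompact
    (volume_preimage_coordEmbedding_inter_eq_zero I hOZ (hdim I))

theorem stmt6 (n : ℕ) (X Y Z : Set (Fin n → ℝ))
    (hXp : IsCompactPolyhedron X) (hYp : IsCompactPolyhedron Y) (hZp : IsCompactPolyhedron Z)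
    (hXo : X ⊆ orthant n) (hYo : Y ⊆ orthant n) (hZo : Z ⊆ orthant n)
    (hXd : Module.finrank ℝ (vectorSpan ℝ X) = n)
    (hYd : Module.finrank ℝ (vectorSpan ℝ Y) = n)
    (hZd : Module.finrank ℝ (vectorSpan ℝ Z) = n)
    (hXYZ : X = Y ∪ Z) (hOY : (0 : Fin n → ℝ) ∈ Y) (hOZ : (0 : Fin n → ℝ) ∉ Z)
    (hdim : ∀ I : Finset (Fin n), I.Nonempty →
      (Y ∩ coordSub I) ∩ (Z ∩ coordSub I) = ∅ ∨
      Module.finrank ℝ (vectorSpan ℝ ((Y ∩ coordSub I) ∩ (Z ∩ coordSub I))) < I.card) :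
    newtonNumberOn Finset.univ X =
      newtonNumberOn Finset.univ Y + newtonNumberOn Finset.univ Z :=
  stmt6_general n X Y Z hYp hZp hXYZ hOZ hdim
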